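/- Let d ∈ {2,3}, let k be a nonnegative integer, let γ₁ > 0, and set γ := γ₁/2. Let u(x) := (log ‖x‖)^k · ‖x‖^{γ₁} for x ∈ ℝ^d, x ≠ 0. Then there exists a constant C > 0 such that for every ρ ∈ (0,1], ∫_{B(0,ρ)} ‖fderiv ℝ u x‖² dx ≤ C · ρ^{2γ+d−2}. In particular, the squared gradient of u is integrable on a neighborhood of the origin. -/

import Mathlib

/-!
Away from the origin `u = φ ∘ ‖·‖` with `φ t = (log t)^k t^γ₁`, so `‖Du x‖ ≤ |φ' ‖x‖|`.
Each power of `log` costs only an arbitrarily small power of `t`, which gives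
`‖Du x‖² ≲ ‖x‖^α` on the unit ball with `α = 3γ₁/2 - 2`. Since `α > -d` this majorant is
integrable, and by scaling `∫_{B(0,ρ)} ‖x‖^α = ρ^(d+α) ∫_{B(0,1)} ‖x‖^α`, where
`ρ^(d+α) ≤ ρ^(2γ+d-2)` for `ρ ≤ 1`.
-/

open MeasureTheory Metric Set Module Filter Topology

lemma abs_log_pow_le_mul_rpow_neg (m : ℕ) {ε : ℝ} (hε : 0 < ε) :
    ∃ M : ℝ, ∀ r : ℝ, 0 < r → r ≤ 1 → |Real.log r| ^ m ≤ M * r ^ (-ε) := by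
  set δ := ε / (m + 1)
  have hδ : 0 < δ := by positivity
  refine ⟨δ⁻¹ ^ m, fun r hr hr1 => ?_⟩
  have hlog : |Real.log r| ≤ δ⁻¹ * r ^ (-δ) := by
    rw [abs_of_nonpos (Real.log_nonpos hr.le hr1), ← Real.log_inv, Real.rpow_neg hr.le,
      ← Real.inv_rpow hr.le, inv_mul_eq_div]
    exact Real.log_le_rpow_div (by positivity) hδ
  have hexp : -ε ≤ -δ * m := by
    have : δ * m ≤ ε := by
      rw [div_mul_eq_mul_div, div_le_iff₀ (by positivity)]
      nlinarith
    linarith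
  calc |Real.log r| ^ m ≤ (δ⁻¹ * r ^ (-δ)) ^ m := by gcongr
    _ = δ⁻¹ ^ m * r ^ (-δ * m) := by rw [mul_pow, Real.rpow_mul_natCast hr.le]
    _ ≤ δ⁻¹ ^ m * r ^ (-ε) :=
        mul_le_mul_of_nonneg_left (Real.rpow_le_rpow_of_exponent_ge hr hr1 hexp) (by positivity)

lemma hasDerivAt_log_pow_mul_rpow (k : ℕ) (γ : ℝ) {r : ℝ} (hr : 0 < r) :
    HasDerivAt (fun t => Real.log t ^ k * t ^ γ)
      ((k * Real.log r ^ (k - 1) + γ * Real.log r ^ k) * r ^ (γ - 1)) r := by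
  have h := ((Real.hasDerivAt_log hr.ne').pow k).mul
    (Real.hasDerivAt_rpow_const (p := γ) (Or.inl hr.ne'))
  refine h.congr_deriv ?_
  rw [Real.rpow_sub_one hr.ne', Pi.pow_apply]
  field_simp

lemma norm_fderiv_le_of_eventuallyEq_comp_norm {E : Type*} [NormedAddCommGroup E]
    [InnerProductSpace ℝ E] {u : E → ℝ} {f : ℝ → ℝ} {f' : ℝ} {x : E} (hx : x ≠ 0)
    (hu : u =ᶠ[𝓝 x] fun y => f ‖y‖) (hf : HasDerivAt f f' ‖x‖) :
    ‖fderiv ℝ u x‖ ≤ |f'| := by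
  have hnorm : DifferentiableAt ℝ (fun y : E => ‖y‖) x :=
    (contDiffAt_norm ℝ hx).differentiableAt one_ne_zero
  have hcomp : HasFDerivAt (fun y => f ‖y‖) (f' • fderiv ℝ (fun y : E => ‖y‖) x) x :=
    hf.comp_hasFDerivAt x hnorm.hasFDerivAt
  rw [hu.fderiv_eq, hcomp.fderiv, norm_smul, Real.norm_eq_abs]
  refine mul_le_of_le_one_right (abs_nonneg _) ?_
  simpa using norm_fderiv_le_of_lipschitz ℝ (x₀ := x) lipschitzWith_one_norm

lemma exists_norm_fderiv_le_of_eq_log_pow_mul_rpow {E : Type*} [NormedAddCommGroup E]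
    [InnerProductSpace ℝ E] (k : ℕ) (γ : ℝ) {u : E → ℝ}
    (hu : ∀ x, x ≠ 0 → u x = Real.log ‖x‖ ^ k * ‖x‖ ^ γ) {ε : ℝ} (hε : 0 < ε) :
    ∃ M : ℝ, ∀ x, x ≠ 0 → ‖x‖ ≤ 1 → ‖fderiv ℝ u x‖ ≤ M * ‖x‖ ^ (γ - 1 - ε) := by
  obtain ⟨M₁, hM₁⟩ := abs_log_pow_le_mul_rpow_neg (k - 1) hε
  obtain ⟨M₂, hM₂⟩ := abs_log_pow_le_mul_rpow_neg k hε
  refine ⟨k * M₁ + |γ| * M₂, fun x hx hx1 => ?_⟩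
  have hr : 0 < ‖x‖ := norm_pos_iff.2 hx
  set r := ‖x‖
  have hu' : u =ᶠ[𝓝 x] fun y => Real.log ‖y‖ ^ k * ‖y‖ ^ γ :=
    eventually_ne_nhds hx |>.mono hu
  calc ‖fderiv ℝ u x‖
      ≤ |(k * Real.log r ^ (k - 1) + γ * Real.log r ^ k) * r ^ (γ - 1)| :=
        norm_fderiv_le_of_eventuallyEq_comp_norm hx hu' (hasDerivAt_log_pow_mul_rpow k γ hr)
    _ ≤ (k * |Real.log r| ^ (k - 1) + |γ| * |Real.log r| ^ k) * r ^ (γ - 1) := by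
        rw [abs_mul, abs_of_pos (Real.rpow_pos_of_pos hr _)]
        gcongr
        refine (abs_add_le _ _).trans_eq ?_
        simp only [abs_mul, abs_pow, Nat.abs_cast]
    _ ≤ (k * (M₁ * r ^ (-ε)) + |γ| * (M₂ * r ^ (-ε))) * r ^ (γ - 1) := by
        gcongr
        exacts [hM₁ r hr hx1, hM₂ r hr hx1]
    _ = (k * M₁ + |γ| * M₂) * r ^ (γ - 1 - ε) := by
        rw [sub_eq_add_neg (γ - 1), Real.rpow_add hr]
        ring

lemma exists_sq_norm_fderiv_le_of_eq_log_pow_mul_rpow {E : Type*} [NormedAddCommGroup E]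
    [InnerProductSpace ℝ E] (k : ℕ) (γ : ℝ) {u : E → ℝ}
    (hu : ∀ x, x ≠ 0 → u x = Real.log ‖x‖ ^ k * ‖x‖ ^ γ) {ε : ℝ} (hε : 0 < ε) :
    ∃ M : ℝ, 0 ≤ M ∧ ∀ x ∈ ball (0 : E) 1, x ≠ 0 →
      ‖‖fderiv ℝ u x‖ ^ 2‖ ≤ M * ‖x‖ ^ (2 * (γ - 1 - ε)) := by
  obtain ⟨M, hM⟩ := exists_norm_fderiv_le_of_eq_log_pow_mul_rpow k γ hu hε
  refine ⟨M ^ 2, sq_nonneg M, fun x hx hx0 => ?_⟩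
  calc ‖‖fderiv ℝ u x‖ ^ 2‖ = ‖fderiv ℝ u x‖ ^ 2 := by rw [norm_pow, norm_norm]
    _ ≤ (M * ‖x‖ ^ (γ - 1 - ε)) ^ 2 :=
      pow_le_pow_left₀ (norm_nonneg _) (hM x hx0 (mem_ball_zero_iff.1 hx).le) 2
    _ = M ^ 2 * ‖x‖ ^ (2 * (γ - 1 - ε)) := by
      rw [mul_pow, ← Real.rpow_mul_natCast (norm_nonneg x), mul_comm (2 : ℝ)]
      norm_cast

section RadialPower

variable {E : Type*} [NormedAddCommGroup E] [NormedSpace ℝ E] [FiniteDimensional ℝ E]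
  [MeasurableSpace E] [BorelSpace E] (μ : Measure E) [μ.IsAddHaarMeasure]

lemma integrableOn_norm_rpow_ball [Nontrivial E] {α : ℝ} (hα : -(finrank ℝ E : ℝ) < α)
    (r : ℝ) : IntegrableOn (fun x : E => ‖x‖ ^ α) (ball 0 r) μ := by
  refine (integrableOn_fun_norm_addHaar μ (f := fun y => y ^ α)).2 ?_
  have hn : 1 ≤ finrank ℝ E := finrank_pos
  have hint : IntegrableOn (fun y : ℝ => y ^ (α + (finrank ℝ E - 1 : ℕ))) (Ioo 0 r) :=
    ((intervalIntegral.intervalIntegrable_rpow' (by push_cast [hn]; linarith)).1).mono_set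
      (Ioo_subset_Ioc_self.trans Ioc_subset_uIoc)
  refine hint.congr_fun (fun y hy => ?_) measurableSet_Ioo
  simp only [Real.rpow_add hy.1, Real.rpow_natCast, smul_eq_mul, mul_comm]

lemma setIntegral_norm_rpow_ball {ρ : ℝ} (hρ : 0 < ρ) (α : ℝ) :
    ∫ x in ball (0 : E) ρ, ‖x‖ ^ α ∂μ =
      ρ ^ (finrank ℝ E + α) * ∫ x in ball (0 : E) 1, ‖x‖ ^ α ∂μ := by
  have h := μ.setIntegral_comp_smul_of_pos (fun x : E => ‖x‖ ^ α) (ball 0 1) hρ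
  rw [smul_unitBall_of_pos hρ] at h
  simp only [norm_smul, Real.norm_of_nonneg hρ.le, Real.mul_rpow hρ.le (norm_nonneg _),
    integral_const_mul, smul_eq_mul] at h
  rw [Real.rpow_add hρ, Real.rpow_natCast, mul_assoc, h, mul_inv_cancel_left₀ (by positivity)]

variable [Nontrivial E] {g : E → ℝ} {C α : ℝ}

lemma ae_restrict_ball_le_of_norm_le_rpow {ρ : ℝ} (hρ1 : ρ ≤ 1)
    (hbound : ∀ x ∈ ball (0 : E) 1, x ≠ 0 → ‖g x‖ ≤ C * ‖x‖ ^ α) :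
    ∀ᵐ x ∂μ.restrict (ball 0 ρ), ‖g x‖ ≤ C * ‖x‖ ^ α := by
  have hne : ∀ᵐ x ∂μ.restrict (ball (0 : E) ρ), x ≠ 0 :=
    ae_restrict_of_ae (compl_mem_ae_iff.2 (measure_singleton 0))
  filter_upwards [hne, ae_restrict_mem measurableSet_ball] with x hx hxρ
  exact hbound x (ball_subset_ball hρ1 hxρ) hx

lemma integrableOn_ball_of_norm_le_rpow (hg : AEStronglyMeasurable g μ)
    (hα : -(finrank ℝ E : ℝ) < α) (hbound : ∀ x ∈ ball (0 : E) 1, x ≠ 0 → ‖g x‖ ≤ C * ‖x‖ ^ α) :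
    IntegrableOn g (ball 0 1) μ :=
  ((integrableOn_norm_rpow_ball μ hα 1).const_mul C).mono' hg.restrict
    (ae_restrict_ball_le_of_norm_le_rpow μ le_rfl hbound)

lemma setIntegral_ball_le_of_norm_le_rpow (hg : AEStronglyMeasurable g μ)
    (hα : -(finrank ℝ E : ℝ) < α) (hbound : ∀ x ∈ ball (0 : E) 1, x ≠ 0 → ‖g x‖ ≤ C * ‖x‖ ^ α)
    {ρ : ℝ} (hρ : 0 < ρ) (hρ1 : ρ ≤ 1) :
    ∫ x in ball (0 : E) ρ, g x ∂μ ≤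
      C * ρ ^ (finrank ℝ E + α) * ∫ x in ball (0 : E) 1, ‖x‖ ^ α ∂μ := by
  have hle := ae_restrict_ball_le_of_norm_le_rpow μ hρ1 hbound
  calc ∫ x in ball (0 : E) ρ, g x ∂μ ≤ ∫ x in ball (0 : E) ρ, C * ‖x‖ ^ α ∂μ :=
        integral_mono_ae ((integrableOn_ball_of_norm_le_rpow μ hg hα hbound).mono_set
          (ball_subset_ball hρ1)) ((integrableOn_norm_rpow_ball μ hα ρ).const_mul C)
          (hle.mono fun x hx => (le_abs_self _).trans hx)
    _ = C * ρ ^ (finrank ℝ E + α) * ∫ x in ball (0 : E) 1, ‖x‖ ^ α ∂μ := by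
        rw [integral_const_mul, setIntegral_norm_rpow_ball μ hρ, mul_assoc]

end RadialPower

/-- Bound `B₁` in the proof of Theorem 5.3: for the singular term
`u(x) = (log ‖x‖)^k ‖x‖^{γ₁}` (with `γ = γ₁/2`), the Dirichlet integral over small
balls satisfies `∫_{B(0,ρ)} ‖Du‖² ≤ C ρ^{2γ+d-2}`; in particular the squared gradient
is integrable near the origin. -/
theorem stmt_6 (d : ℕ) (hd : d = 2 ∨ d = 3) (k : ℕ) (γ₁ : ℝ) (hγ₁ : 0 < γ₁)
    (γ : ℝ) (hγ : γ = γ₁ / 2)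
    (u : EuclideanSpace ℝ (Fin d) → ℝ)
    (hu : ∀ x : EuclideanSpace ℝ (Fin d), x ≠ 0 → u x = (Real.log ‖x‖) ^ k * ‖x‖ ^ γ₁) :
    (∃ C : ℝ, 0 < C ∧ ∀ ρ : ℝ, 0 < ρ → ρ ≤ 1 →
      (∫ x in Metric.ball (0 : EuclideanSpace ℝ (Fin d)) ρ, ‖fderiv ℝ u x‖ ^ 2) ≤
        C * ρ ^ (2 * γ + d - 2)) ∧
    IntegrableOn (fun x : EuclideanSpace ℝ (Fin d) => ‖fderiv ℝ u x‖ ^ 2)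
      (Metric.ball (0 : EuclideanSpace ℝ (Fin d)) 1) := by
  subst hγ
  have hdim : (finrank ℝ (EuclideanSpace ℝ (Fin d)) : ℝ) = d := by
    rw [finrank_euclideanSpace_fin]
  have : Nontrivial (EuclideanSpace ℝ (Fin d)) :=
    Module.nontrivial_of_finrank_pos (R := ℝ) (by rw [finrank_euclideanSpace_fin]; omega)
  obtain ⟨M, hM0, hM⟩ := exists_sq_norm_fderiv_le_of_eq_log_pow_mul_rpow k γ₁ hu
    (ε := γ₁ / 4) (by positivity)
  have hd2 : (2 : ℝ) ≤ d := by rcases hd with rfl | rfl <;> norm_num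
  have hα : -(finrank ℝ (EuclideanSpace ℝ (Fin d)) : ℝ) < 2 * (γ₁ - 1 - γ₁ / 4) := by
    rw [hdim]; linarith
  have hmeas : AEStronglyMeasurable (fun x => ‖fderiv ℝ u x‖ ^ 2) volume :=
    ((measurable_fderiv ℝ u).norm.pow_const 2).aestronglyMeasurable
  set I := ∫ x in ball (0 : EuclideanSpace ℝ (Fin d)) 1, ‖x‖ ^ (2 * (γ₁ - 1 - γ₁ / 4))
  have hI : 0 ≤ I := setIntegral_nonneg measurableSet_ball fun x _ => by positivity
  refine ⟨⟨M * I + 1, by positivity, fun ρ hρ hρ1 => ?_⟩,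
    integrableOn_ball_of_norm_le_rpow volume hmeas hα hM⟩
  have hρα : ρ ^ (d + 2 * (γ₁ - 1 - γ₁ / 4)) ≤ ρ ^ (2 * (γ₁ / 2) + d - 2) :=
    Real.rpow_le_rpow_of_exponent_ge hρ hρ1 (by linarith)
  calc ∫ x in ball (0 : EuclideanSpace ℝ (Fin d)) ρ, ‖fderiv ℝ u x‖ ^ 2
      ≤ M * ρ ^ (d + 2 * (γ₁ - 1 - γ₁ / 4)) * I := by
        simpa only [hdim] using setIntegral_ball_le_of_norm_le_rpow volume hmeas hα hM hρ hρ1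
    _ ≤ M * ρ ^ (2 * (γ₁ / 2) + d - 2) * I := by gcongr
    _ ≤ (M * I + 1) * ρ ^ (2 * (γ₁ / 2) + d - 2) := by
        nlinarith [Real.rpow_nonneg hρ.le (2 * (γ₁ / 2) + d - 2)]
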